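/- Let A : ℝ → Matrix (Fin n) (Fin n) ℝ and F : ℝ → Matrix (Fin n) (Fin 1) ℝ be continuous on [0, b], and let C be a constant n × 1 real matrix. Then U(x) := ℰ(A)(x) · C + ℰ(A)(x) · ∫_0^x ℱ(−A)(s) · F(s) ds is differentiable on (0, b) and solves the linear system d/dx U(x) = A(x) · U(x) + F(x) with U(0) = C. -/

import Mathlib

open MeasureTheory Matrix

/- Matrices are equipped with the elementwise sup norm. -/
attribute [local instance] Matrix.normedAddCommGroup Matrix.normedSpace

/-- Terms of the left integral series: `E_0(x) = 1`, `E_{k+1}(x) = ∫_0^x X(t) * E_k(t) dt`. -/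
noncomputable def lterm {ι : Type*} [Fintype ι] [DecidableEq ι]
    (X : ℝ → Matrix ι ι ℝ) : ℕ → ℝ → Matrix ι ι ℝ
  | 0, _ => 1
  | k + 1, x => ∫ t in (0:ℝ)..x, X t * lterm X k t

/-- The left integral series `ℰ(X)(x) = ∑_{k=0}^∞ E_k(x)`. -/
noncomputable def ES {ι : Type*} [Fintype ι] [DecidableEq ι]
    (X : ℝ → Matrix ι ι ℝ) (x : ℝ) : Matrix ι ι ℝ := ∑' k, lterm X k x

/-- Terms of the right integral series: `F_0(x) = 1`, `F_{k+1}(x) = ∫_0^x F_k(t) * X(t) dt`. -/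
noncomputable def rterm {ι : Type*} [Fintype ι] [DecidableEq ι]
    (X : ℝ → Matrix ι ι ℝ) : ℕ → ℝ → Matrix ι ι ℝ
  | 0, _ => 1
  | k + 1, x => ∫ t in (0:ℝ)..x, rterm X k t * X t

/-- The right integral series `ℱ(X)(x) = ∑_{k=0}^∞ F_k(x)`. -/
noncomputable def FS {ι : Type*} [Fintype ι] [DecidableEq ι]
    (X : ℝ → Matrix ι ι ℝ) (x : ℝ) : Matrix ι ι ℝ := ∑' k, rterm X k x
/-!
`ES X` solves `E' = X E`, `E 0 = 1`: if `‖X‖ ≤ M` on `[0, b]`, its `k`-th term is bounded there by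
`(card ι * M * b)^k / k!`, so the series may be differentiated termwise, and each term
differentiates to `X` times the previous one.
Transposing the recursion gives `FS X = (ES Xᵀ)ᵀ`, which solves `F' = F X`, `F 0 = 1`. Hence
`(FS (-A) * ES A)' = -FS (-A) A ES A + FS (-A) A ES A = 0`, so `FS (-A)` is the inverse of `ES A`,
and the product rule gives `U' = A U + ES A * FS (-A) * F = A U + F`.
-/

open Set Nat

/- The topology of the sup-norm instance is not reducibly the product topology `Matrix` carries,
so instance search cannot derive these two from it; they are transported from `ι → κ → ℝ`. -/
noncomputable instance Matrix.instENormedAddMonoidReal {ι κ : Type*} [Fintype ι] [Fintype κ] :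
    ENormedAddMonoid (Matrix ι κ ℝ) :=
  inferInstanceAs (ENormedAddMonoid (ι → κ → ℝ))

instance Matrix.instPseudoMetrizableSpaceReal {ι κ : Type*} [Fintype ι] [Fintype κ] :
    TopologicalSpace.PseudoMetrizableSpace (Matrix ι κ ℝ) :=
  inferInstanceAs (TopologicalSpace.PseudoMetrizableSpace (ι → κ → ℝ))

namespace Matrix

variable {ι κ μ : Type*} [Fintype ι] [Fintype κ] [Fintype μ]

theorem norm_mul_le_card (X : Matrix ι κ ℝ) (Y : Matrix κ μ ℝ) :
    ‖X * Y‖ ≤ Fintype.card κ * ‖X‖ * ‖Y‖ := by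
  refine (Matrix.norm_le_iff (by positivity)).2 fun i j => ?_
  calc ‖(X * Y) i j‖ ≤ ∑ k, ‖X i k‖ * ‖Y k j‖ := by
        rw [mul_apply]
        exact (norm_sum_le _ _).trans_eq (by simp only [norm_mul])
    _ ≤ ∑ _k : κ, ‖X‖ * ‖Y‖ := by
        gcongr with k
        · exact norm_entry_le_entrywise_sup_norm X
        · exact norm_entry_le_entrywise_sup_norm Y
    _ = Fintype.card κ * ‖X‖ * ‖Y‖ := by simp [mul_assoc]

theorem norm_one_le [DecidableEq ι] : ‖(1 : Matrix ι ι ℝ)‖ ≤ 1 :=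
  (Matrix.norm_le_iff zero_le_one).2 fun i j => by
    rw [one_apply]
    split_ifs <;> simp

noncomputable def mulL : Matrix ι κ ℝ →L[ℝ] Matrix κ μ ℝ →L[ℝ] Matrix ι μ ℝ :=
  (LinearMap.mk₂ ℝ (· * ·) Matrix.add_mul Matrix.smul_mul Matrix.mul_add
    fun c X Y => Matrix.mul_smul X c Y).mkContinuous₂ (Fintype.card κ) norm_mul_le_card

noncomputable def transposeLIE : Matrix ι κ ℝ ≃ₗᵢ[ℝ] Matrix κ ι ℝ :=
  { transposeLinearEquiv ι κ ℝ ℝ with norm_map' := norm_transpose }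

theorem intervalIntegral_transpose (f : ℝ → Matrix ι κ ℝ) (a b : ℝ) :
    (∫ t in a..b, f t)ᵀ = ∫ t in a..b, (f t)ᵀ :=
  ((transposeLIE : Matrix ι κ ℝ ≃ₗᵢ[ℝ] _).toLinearIsometry.intervalIntegral_comp_comm f).symm

end Matrix

section Calculus

variable {ι κ μ : Type*}

theorem ContinuousOn.matrix_mul [Fintype κ] {α : Type*} [TopologicalSpace α] {s : Set α}
    {f : α → Matrix ι κ ℝ} {g : α → Matrix κ μ ℝ} (hf : ContinuousOn f s)
    (hg : ContinuousOn g s) : ContinuousOn (fun y => f y * g y) s :=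
  (continuous_fst.matrix_mul continuous_snd).comp_continuousOn (hf.prodMk hg)

theorem HasDerivAt.matrix_mul [Fintype ι] [Fintype κ] [Fintype μ] {f : ℝ → Matrix ι κ ℝ}
    {g : ℝ → Matrix κ μ ℝ} {f' : Matrix ι κ ℝ} {g' : Matrix κ μ ℝ} {x : ℝ} (hf : HasDerivAt f f' x)
    (hg : HasDerivAt g g' x) : HasDerivAt (fun y => f y * g y) (f' * g x + f x * g') x := by
  rw [add_comm]
  exact Matrix.mulL.hasDerivAt_of_bilinear (fun _ => hf) (fun _ => hg)

theorem HasDerivAt.matrix_transpose [Fintype ι] [Fintype κ] {f : ℝ → Matrix ι κ ℝ}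
    {f' : Matrix ι κ ℝ} {x : ℝ} (hf : HasDerivAt f f' x) : HasDerivAt (fun y => (f y)ᵀ) f'ᵀ x :=
  (Matrix.transposeLIE : Matrix ι κ ℝ ≃ₗᵢ[ℝ] _).toContinuousLinearEquiv.hasFDerivAt.comp_hasDerivAt
    x hf

theorem ContinuousOn.matrix_transpose {α : Type*} [TopologicalSpace α] {s : Set α}
    {f : α → Matrix ι κ ℝ} (hf : ContinuousOn f s) : ContinuousOn (fun y => (f y)ᵀ) s :=
  continuous_id.matrix_transpose.comp_continuousOn hf

theorem hasDerivAt_integral_of_continuousOn_Icc {E : Type*} [NormedAddCommGroup E]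
    [NormedSpace ℝ E] [CompleteSpace E] {f : ℝ → E} {a b x : ℝ} (hf : ContinuousOn f (Icc a b))
    (hx : x ∈ Ioo a b) : HasDerivAt (fun y => ∫ t in a..y, f t) (f x) x :=
  intervalIntegral.integral_hasDerivAt_right
    ((hf.mono (Icc_subset_Icc_right hx.2.le)).intervalIntegrable_of_Icc hx.1.le)
    ((hf.mono Ioo_subset_Icc_self).stronglyMeasurableAtFilter isOpen_Ioo x hx)
    (hf.continuousAt (Icc_mem_nhds hx.1 hx.2))

theorem eq_of_continuousOn_Icc_of_hasDerivAt_zero {E : Type*} [NormedAddCommGroup E]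
    [NormedSpace ℝ E] {f : ℝ → E} {a b : ℝ} (hf : ContinuousOn f (Icc a b))
    (hf' : ∀ x ∈ Ioo a b, HasDerivAt f 0 x) {x y : ℝ} (hx : x ∈ Icc a b) (hy : y ∈ Icc a b) :
    f x = f y := by
  rcases le_or_gt b a with hba | hab
  · rw [le_antisymm (hx.2.trans hba) hx.1, le_antisymm (hy.2.trans hba) hy.1]
  obtain ⟨c, hc⟩ := nonempty_Ioo.2 hab
  have hconst : EqOn f (fun _ => f c) (Ioo a b) := fun z hz =>
    isOpen_Ioo.is_const_of_deriv_eq_zero isPreconnected_Ioo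
      (fun w hw => (hf' w hw).differentiableAt.differentiableWithinAt)
      (fun w hw => (hf' w hw).deriv) hz hc
  have hconst' := hconst.of_subset_closure hf continuousOn_const Ioo_subset_Icc_self
    (closure_Ioo hab.ne).ge
  rw [hconst' hx, hconst' hy]

end Calculus

section LeftSeries

variable {ι : Type*} [Fintype ι] [DecidableEq ι] {X : ℝ → Matrix ι ι ℝ} {b M : ℝ}

theorem continuousOn_lterm (hb : 0 ≤ b) (hX : ContinuousOn X (Icc 0 b)) (k : ℕ) :
    ContinuousOn (lterm X k) (Icc 0 b) := by
  induction k with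
  | zero => exact continuousOn_const
  | succ k ih =>
    have hint : IntegrableOn (fun t => X t * lterm X k t) (uIcc 0 b) := by
      rw [uIcc_of_le hb]
      exact (hX.matrix_mul ih).integrableOn_Icc
    have hprim := intervalIntegral.continuousOn_primitive_interval hint
    rw [uIcc_of_le hb] at hprim
    exact hprim

theorem hasDerivAt_lterm_succ (hX : ContinuousOn X (Icc 0 b)) {x : ℝ} (hx : x ∈ Ioo 0 b)
    (k : ℕ) : HasDerivAt (lterm X (k + 1)) (X x * lterm X k x) x :=
  hasDerivAt_integral_of_continuousOn_Icc
    (hX.matrix_mul (continuousOn_lterm (hx.1.trans hx.2).le hX k)) hx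

theorem norm_lterm_le (hX : ContinuousOn X (Icc 0 b)) (hM : ∀ t ∈ Icc 0 b, ‖X t‖ ≤ M)
    (k : ℕ) {x : ℝ} (hx : x ∈ Icc 0 b) :
    ‖lterm X k x‖ ≤ (Fintype.card ι * M * x) ^ k / k ! := by
  have hM0 : 0 ≤ M := (norm_nonneg _).trans (hM x hx)
  set c : ℝ := Fintype.card ι * M
  induction k generalizing x with
  | zero => simpa [lterm] using Matrix.norm_one_le
  | succ k ih =>
    have hsub : Icc 0 x ⊆ Icc 0 b := Icc_subset_Icc_right hx.2
    have hint : IntervalIntegrable (fun t => X t * lterm X k t) volume 0 x :=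
      ((hX.matrix_mul (continuousOn_lterm (hx.1.trans hx.2) hX k)).mono
        hsub).intervalIntegrable_of_Icc hx.1
    calc ‖lterm X (k + 1) x‖ ≤ ∫ t in (0:ℝ)..x, ‖X t * lterm X k t‖ :=
          intervalIntegral.norm_integral_le_integral_norm hx.1
      _ ≤ ∫ t in (0:ℝ)..x, c ^ (k + 1) / k ! * t ^ k := by
          refine intervalIntegral.integral_mono_on hx.1 hint.norm
            ((continuous_const.mul (continuous_pow k)).intervalIntegrable _ _) fun t ht => ?_
          calc ‖X t * lterm X k t‖ ≤ Fintype.card ι * ‖X t‖ * ‖lterm X k t‖ :=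
                Matrix.norm_mul_le_card _ _
            _ ≤ Fintype.card ι * M * ((c * t) ^ k / k !) := by
                gcongr
                exacts [hM t (hsub ht), ih (hsub ht)]
            _ = c ^ (k + 1) / k ! * t ^ k := by ring
      _ = (c * x) ^ (k + 1) / (k + 1)! := by
          rw [intervalIntegral.integral_const_mul, integral_pow, factorial_succ]
          push_cast
          field_simp
          ring

theorem norm_lterm_le_of_mem_Icc (hX : ContinuousOn X (Icc 0 b))
    (hM : ∀ t ∈ Icc 0 b, ‖X t‖ ≤ M) (k : ℕ) {x : ℝ} (hx : x ∈ Icc 0 b) :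
    ‖lterm X k x‖ ≤ (Fintype.card ι * M * b) ^ k / k ! := by
  have hM0 : 0 ≤ M := (norm_nonneg _).trans (hM x hx)
  refine (norm_lterm_le hX hM k hx).trans ?_
  gcongr
  · exact mul_nonneg (by positivity) hx.1
  · exact hx.2

theorem summable_lterm (hX : ContinuousOn X (Icc 0 b)) (hM : ∀ t ∈ Icc 0 b, ‖X t‖ ≤ M)
    {x : ℝ} (hx : x ∈ Icc 0 b) : Summable (lterm X · x) :=
  .of_norm_bounded (Real.summable_pow_div_factorial _) (norm_lterm_le_of_mem_Icc hX hM · hx)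

theorem continuousOn_ES (hb : 0 ≤ b) (hX : ContinuousOn X (Icc 0 b)) :
    ContinuousOn (ES X) (Icc 0 b) := by
  obtain ⟨M, hM⟩ := isCompact_Icc.exists_bound_of_continuousOn hX
  exact continuousOn_tsum (continuousOn_lterm hb hX) (Real.summable_pow_div_factorial _)
    fun k _ hx => norm_lterm_le_of_mem_Icc hX hM k hx

theorem hasDerivAt_ES (hX : ContinuousOn X (Icc 0 b)) {x : ℝ} (hx : x ∈ Ioo 0 b) :
    HasDerivAt (ES X) (X x * ES X x) x := by
  obtain ⟨M, hM⟩ := isCompact_Icc.exists_bound_of_continuousOn hX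
  have hsum {y : ℝ} (hy : y ∈ Ioo 0 b) := summable_lterm hX hM (Ioo_subset_Icc_self hy)
  have htail : HasDerivAt (fun y => ∑' k, lterm X (k + 1) y) (∑' k, X x * lterm X k x) x := by
    refine hasDerivAt_tsum_of_isPreconnected
      ((Real.summable_pow_div_factorial (Fintype.card ι * M * b)).mul_left (Fintype.card ι * M))
      isOpen_Ioo isPreconnected_Ioo (fun k y hy => hasDerivAt_lterm_succ hX hy k)
      (fun k y hy => ?_) hx ((summable_nat_add_iff 1).2 (hsum hx)) hx
    have hy := Ioo_subset_Icc_self hy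
    calc ‖X y * lterm X k y‖ ≤ Fintype.card ι * ‖X y‖ * ‖lterm X k y‖ :=
          Matrix.norm_mul_le_card _ _
      _ ≤ _ := by
          have hM0 : 0 ≤ M := (norm_nonneg _).trans (hM y hy)
          gcongr
          exacts [hM y hy, norm_lterm_le_of_mem_Icc hX hM k hy]
  rw [(hsum hx).tsum_mul_left] at htail
  refine (htail.const_add 1).congr_of_eventuallyEq ?_
  filter_upwards [isOpen_Ioo.mem_nhds hx] with y hy
  exact (hsum hy).tsum_eq_zero_add

theorem ES_zero : ES X 0 = 1 := by
  rw [ES, tsum_eq_single 0 fun k hk => ?_]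
  · rfl
  · obtain ⟨k, rfl⟩ := exists_eq_succ_of_ne_zero hk
    exact intervalIntegral.integral_same

end LeftSeries

section RightSeries

variable {ι : Type*} [Fintype ι] [DecidableEq ι] {X : ℝ → Matrix ι ι ℝ} {b : ℝ}

theorem rterm_eq_transpose_lterm (X : ℝ → Matrix ι ι ℝ) (k : ℕ) (x : ℝ) :
    rterm X k x = (lterm (fun t => (X t)ᵀ) k x)ᵀ := by
  induction k generalizing x with
  | zero => exact transpose_one.symm
  | succ k ih =>
    simp only [rterm, lterm, Matrix.intervalIntegral_transpose, transpose_mul, transpose_transpose,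
      ih]

theorem FS_eq_transpose_ES (X : ℝ → Matrix ι ι ℝ) :
    FS X = fun x => (ES (fun t => (X t)ᵀ) x)ᵀ := by
  ext1 x
  rw [FS, ES, Matrix.transpose_tsum]
  simp only [rterm_eq_transpose_lterm]

theorem continuousOn_FS (hb : 0 ≤ b) (hX : ContinuousOn X (Icc 0 b)) :
    ContinuousOn (FS X) (Icc 0 b) := by
  rw [FS_eq_transpose_ES]
  exact (continuousOn_ES hb hX.matrix_transpose).matrix_transpose

theorem hasDerivAt_FS (hX : ContinuousOn X (Icc 0 b)) {x : ℝ} (hx : x ∈ Ioo 0 b) :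
    HasDerivAt (FS X) (FS X x * X x) x := by
  have h := (hasDerivAt_ES hX.matrix_transpose hx).matrix_transpose
  rw [transpose_mul, transpose_transpose] at h
  rwa [FS_eq_transpose_ES]

theorem FS_zero : FS X 0 = 1 := by
  simp only [FS_eq_transpose_ES, ES_zero, transpose_one]

end RightSeries

theorem FS_neg_mul_ES {ι : Type*} [Fintype ι] [DecidableEq ι] {X : ℝ → Matrix ι ι ℝ} {b : ℝ}
    (hX : ContinuousOn X (Icc 0 b)) {x : ℝ} (hx : x ∈ Icc 0 b) :
    FS (fun t => -X t) x * ES X x = 1 := by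
  have hb : 0 ≤ b := hx.1.trans hx.2
  have hN : ContinuousOn (fun t => -X t) (Icc 0 b) := hX.neg
  have hconst := eq_of_continuousOn_Icc_of_hasDerivAt_zero
    ((continuousOn_FS hb hN).matrix_mul (continuousOn_ES hb hX)) (fun y hy => ?_) hx ⟨le_rfl, hb⟩
  · rw [hconst, FS_zero, ES_zero, Matrix.one_mul]
  · have h := (hasDerivAt_FS hN hy).matrix_mul (hasDerivAt_ES hX hy)
    rwa [Matrix.mul_neg, Matrix.neg_mul, Matrix.mul_assoc, neg_add_cancel] at h

/-- `U(x) = ℰ(A)(x)·C + ℰ(A)(x)·∫_0^x ℱ(−A)(s)·F(s) ds` solves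
`U' = A·U + F`, `U 0 = C`. -/
theorem linear_ODE_solution {n : ℕ} (b : ℝ)
    (A : ℝ → Matrix (Fin n) (Fin n) ℝ) (F : ℝ → Matrix (Fin n) (Fin 1) ℝ)
    (C : Matrix (Fin n) (Fin 1) ℝ)
    (hA : ContinuousOn A (Set.Icc 0 b)) (hF : ContinuousOn F (Set.Icc 0 b))
    (U : ℝ → Matrix (Fin n) (Fin 1) ℝ)
    (hU : ∀ x, U x = ES A x * C +
      ES A x * ∫ s in (0:ℝ)..x, FS (fun t => -A t) s * F s) :
    (∀ x ∈ Set.Ioo (0:ℝ) b, HasDerivAt U (A x * U x + F x) x) ∧ U 0 = C := by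
  refine ⟨fun x hx => ?_, by rw [hU, ES_zero, intervalIntegral.integral_same]; simp⟩
  set G := FS fun t => -A t
  have hG : ContinuousOn G (Icc 0 b) := continuousOn_FS (hx.1.trans hx.2).le hA.neg
  have hW : HasDerivAt (fun y => ∫ s in (0:ℝ)..y, G s * F s) (G x * F x) x :=
    hasDerivAt_integral_of_continuousOn_Icc (hG.matrix_mul hF) hx
  have hEG : ES A x * G x = 1 := mul_eq_one_comm.1 (FS_neg_mul_ES hA (Ioo_subset_Icc_self hx))
  have hE := hasDerivAt_ES hA hx
  have h := (hE.matrix_mul (hasDerivAt_const x C)).add (hE.matrix_mul hW)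
  rw [← Matrix.mul_assoc, hEG, Matrix.one_mul, Matrix.mul_zero, add_zero, Matrix.mul_assoc,
    Matrix.mul_assoc, ← add_assoc, ← Matrix.mul_add, ← hU] at h
  exact h.congr_of_eventuallyEq (Filter.Eventually.of_forall hU)
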